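/- Let u : ℝⁿ → ℝ be C² with ∇u ≠ 0 at a point. With ν = ∇u/|∇u|, P = I − ν⊗ν, C = ∇²u/|∇u|, A = PCP, φ = −log|∇u|: the squared Frobenius norms satisfy |C|² − 2|∇φ|² = |A|² − (∂_ν φ)². Equivalently, |C|² = |A|² + 2|∇_T φ|² + (∂_ν φ)², where ∇_T φ = P∇φ is the tangential gradient. -/
import Mathlib


open Matrix

noncomputable section

/-- Block-form identity for the normalized Hessian C at a point where ∇u ≠ 0:
with ν the unit normal, P = I - ν⊗ν, A = PCP and w = -Cν playing the role of ∇φ,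
|C|² - 2|∇φ|² = |A|² - (∂_ν φ)² and |C|² = |A|² + 2|∇_T φ|² + (∂_ν φ)². -/
theorem stmt5 {n : ℕ} (C : Matrix (Fin n) (Fin n) ℝ) (ν : Fin n → ℝ)
    (hC : Cᵀ = C) (hν : ν ⬝ᵥ ν = 1) :
    let P : Matrix (Fin n) (Fin n) ℝ := 1 - vecMulVec ν ν
    let A := P * C * P
    let w := -(C *ᵥ ν)
    ((∑ i, ∑ j, C i j ^ 2) - 2 * (w ⬝ᵥ w) = (∑ i, ∑ j, A i j ^ 2) - (ν ⬝ᵥ w) ^ 2) ∧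
    (∑ i, ∑ j, C i j ^ 2)
      = (∑ i, ∑ j, A i j ^ 2) + 2 * ((P *ᵥ w) ⬝ᵥ (P *ᵥ w)) + (ν ⬝ᵥ w) ^ 2 := by
  intro P A w
  set Q : Matrix (Fin n) (Fin n) ℝ := vecMulVec ν ν with hQ
  set t : ℝ := ν ⬝ᵥ (C *ᵥ ν) with ht
  have hν' : ∑ k, ν k * ν k = 1 := hν
  have hQQ : Q * Q = Q := by
    ext i j
    simp only [hQ, Matrix.mul_apply, vecMulVec_apply]
    calc ∑ k, ν i * ν k * (ν k * ν j) = (ν i * ν j) * ∑ k, ν k * ν k := by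
          rw [Finset.mul_sum]; exact Finset.sum_congr rfl fun k _ => by ring
      _ = ν i * ν j := by rw [hν', mul_one]
  have hQT : Qᵀ = Q := by
    ext i j; simp [hQ, vecMulVec_apply, mul_comm]
  have htrQ : trace Q = 1 := by
    simpa [trace, Matrix.diag, hQ, vecMulVec_apply] using hν'
  have hQCQ : Q * C * Q = t • Q := by
    ext i j
    simp only [hQ, ht, Matrix.mul_apply, vecMulVec_apply, Matrix.smul_apply,
      smul_eq_mul, dotProduct, mulVec]
    simp_rw [Finset.sum_mul, Finset.mul_sum]
    rw [Finset.sum_comm]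
    refine Finset.sum_congr rfl fun l _ => ?_
    rw [Finset.sum_mul]
    exact Finset.sum_congr rfl fun k _ => by ring
  have hPdef : P = 1 - Q := rfl
  have sumsq : ∀ M : Matrix (Fin n) (Fin n) ℝ, Mᵀ = M →
      ∑ i, ∑ j, M i j ^ 2 = trace (M * M) := by
    intro M hM
    simp only [trace, Matrix.diag, Matrix.mul_apply]
    refine Finset.sum_congr rfl fun i _ => Finset.sum_congr rfl fun j _ => ?_
    have h2 : M j i = M i j := by conv_lhs => rw [← hM, Matrix.transpose_apply]
    rw [sq, h2]
  have traceMQ : ∀ M : Matrix (Fin n) (Fin n) ℝ, trace (M * Q) = ν ⬝ᵥ (M *ᵥ ν) := by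
    intro M
    simp only [trace, Matrix.diag, Matrix.mul_apply, hQ, vecMulVec_apply,
      dotProduct, mulVec]
    refine Finset.sum_congr rfl fun i _ => ?_
    rw [Finset.mul_sum]
    exact Finset.sum_congr rfl fun j _ => by ring
  have hPT : Pᵀ = P := by rw [hPdef, transpose_sub, transpose_one, hQT]
  have hAT : Aᵀ = A := by
    show (P * C * P)ᵀ = P * C * P
    rw [transpose_mul, transpose_mul, hPT, hC, Matrix.mul_assoc]
  -- w ⬝ᵥ w = trace (C * C * Q)
  have hmvC : vecMul ν C = C *ᵥ ν := by rw [← Matrix.mulVec_transpose, hC]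
  have hww : w ⬝ᵥ w = trace (C * (C * Q)) := by
    rw [← Matrix.mul_assoc, traceMQ, ← Matrix.mulVec_mulVec, Matrix.dotProduct_mulVec, hmvC]
    show w ⬝ᵥ w = _
    rw [show w = -(C *ᵥ ν) from rfl, neg_dotProduct, dotProduct_neg, neg_neg]
  have hνw : ν ⬝ᵥ w = -t := by
    show ν ⬝ᵥ (-(C *ᵥ ν)) = -t
    rw [dotProduct_neg, ht]
  -- trace (A*A)
  have hAe : A = C - Q*C - C*Q + t•Q := by
    calc A = (1-Q)*C*(1-Q) := by rw [← hPdef]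
      _ = C - Q*C - C*Q + Q*C*Q := by noncomm_ring
      _ = C - Q*C - C*Q + t•Q := by rw [hQCQ]
  have eQC : trace (Q*C) = t := by rw [trace_mul_comm, traceMQ]
  have eCQ : trace (C*Q) = t := by rw [traceMQ]
  have eQQ : trace (Q*Q) = (1:ℝ) := by rw [hQQ, htrQ]
  have eQQC : Q*(Q*C) = Q*C := by rw [← Matrix.mul_assoc, hQQ]
  have eCQQ : C*(Q*Q) = C*Q := by rw [hQQ]
  have eQCQ : trace (Q*(C*Q)) = t := by
    rw [← Matrix.mul_assoc, hQCQ, trace_smul, htrQ, smul_eq_mul, mul_one]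
  have eQCC : trace (Q*(C*C)) = trace (C*(C*Q)) := by
    rw [trace_mul_comm, Matrix.mul_assoc]
  have eCQC : trace (C*(Q*C)) = trace (C*(C*Q)) := by
    rw [trace_mul_comm, Matrix.mul_assoc, eQCC]
  have eQCCQ : trace (Q*(C*(C*Q))) = trace (C*(C*Q)) := by
    rw [trace_mul_comm, Matrix.mul_assoc, Matrix.mul_assoc, hQQ]
  have eQCQC : trace (Q*(C*(Q*C))) = t^2 := by
    rw [← Matrix.mul_assoc, ← Matrix.mul_assoc, hQCQ, smul_mul_assoc, trace_smul,
      smul_eq_mul, eQC]; ring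
  have eCQCQ : trace (C*(Q*(C*Q))) = t^2 := by
    rw [trace_mul_comm, ← Matrix.mul_assoc, hQCQ, smul_mul_assoc, trace_smul,
      smul_eq_mul, eQC]; ring
  have htraceAA : trace (A * A) = trace (C*C) - 2 * trace (C*(C*Q)) + t^2 := by
    rw [hAe]
    simp only [sub_mul, mul_sub, add_mul, mul_add, smul_mul_assoc, mul_smul_comm,
      smul_smul, trace_sub, trace_add, trace_smul, smul_eq_mul, Matrix.mul_assoc]
    rw [eQQC, eCQQ, eQCC, eCQC, eQCCQ, eQCQC, eCQCQ, eQCQ, eQC, eCQ, eQQ]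
    ring
  have hQv : Q *ᵥ w = (ν ⬝ᵥ w) • ν := by
    ext i
    simp only [hQ, mulVec, dotProduct, vecMulVec_apply, Pi.smul_apply, smul_eq_mul]
    rw [Finset.sum_mul]
    exact Finset.sum_congr rfl fun j _ => by ring
  have hPw : (P *ᵥ w) ⬝ᵥ (P *ᵥ w) = trace (C*(C*Q)) - t^2 := by
    have h1 : P *ᵥ w = w - (ν ⬝ᵥ w) • ν := by
      rw [hPdef, Matrix.sub_mulVec, Matrix.one_mulVec, hQv]
    rw [h1]
    simp only [sub_dotProduct, dotProduct_sub, smul_dotProduct, dotProduct_smul,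
      smul_eq_mul, hν]
    rw [dotProduct_comm w ν, hww, hνw]
    ring
  have hsC : ∑ i, ∑ j, C i j ^ 2 = trace (C*C) := sumsq C hC
  have hsA : ∑ i, ∑ j, A i j ^ 2 = trace (A*A) := sumsq A hAT
  constructor
  · rw [hsC, hsA, htraceAA, hww, hνw]; ring
  · rw [hsC, hsA, htraceAA, hνw, hPw]; ring
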